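/- Let (X, cl) be a finitary matroid with rank rk, δ : X → X a quasi-endomorphism, a ∈ X and B ⊆ X. Then the following are equivalent: (1) rk(J^∞(a) | J^∞(B)) is finite; (2) there exists n with rk(J^n(a) | J^∞(B)) ≤ n; (3) there exists n with δⁿa ∈ cl(J^{n−1}(a) ∪ J^∞(B)). -/

import Mathlib

/-- A finitary matroid (pregeometry) on a type `X`, given by a closure operator. -/
structure Pregeometry (X : Type*) where
  cl : Set X → Set X
  subset_cl : ∀ A : Set X, A ⊆ cl A
  mono : ∀ A B : Set X, A ⊆ B → cl A ⊆ cl B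
  cl_cl : ∀ A : Set X, cl (cl A) = cl A
  finitary : ∀ (A : Set X) (a : X), a ∈ cl A → ∃ F : Finset X, ↑F ⊆ A ∧ a ∈ cl ↑F
  exchange : ∀ (a b : X) (A : Set X), a ∈ cl (A ∪ {b}) → a ∉ cl A → b ∈ cl (A ∪ {a})

/-- `S` is independent over `B` with respect to a closure operator. -/
def clIndep {X : Type*} (cl : Set X → Set X) (B S : Set X) : Prop :=
  ∀ s ∈ S, s ∉ cl (B ∪ (S \ {s}))

/-- The rank of `A` over `B` with respect to a closure operator: the supremum of the
cardinalities of subsets of `A` independent over `B`. -/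
noncomputable def clRank {X : Type*} (cl : Set X → Set X) (A B : Set X) : Cardinal :=
  ⨆ S : {S : Set X // S ⊆ A ∧ clIndep cl B S}, Cardinal.mk S.1

/-- The set of all iterated images `δⁱ a` for `a ∈ A`, `i < ω` (the infinite jet). -/
def Jinf {X : Type*} (δ : X → X) (A : Set X) : Set X :=
  ⋃ a ∈ A, Set.range fun i : ℕ => δ^[i] a

/-- The jet `{δⁱ a : a ∈ A, i ≤ n}`. -/
def Jle {X : Type*} (δ : X → X) (A : Set X) (n : ℕ) : Set X :=
  ⋃ a ∈ A, (fun i : ℕ => δ^[i] a) '' {i | i ≤ n}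

/-- The jet `{δⁱ a : a ∈ A, i < n}` (so `Jlt δ A 0 = ∅`, playing the role of `J^{-1}`). -/
def Jlt {X : Type*} (δ : X → X) (A : Set X) (n : ℕ) : Set X :=
  ⋃ a ∈ A, (fun i : ℕ => δ^[i] a) '' {i | i < n}

/-- `δ` is a quasi-endomorphism of the pregeometry `P`:
`rk(δA | A ∪ B ∪ δB) ≤ rk(A | B)` for all `A, B`. -/
def IsQuasiEndo {X : Type*} (P : Pregeometry X) (δ : X → X) : Prop :=
  ∀ A B : Set X, clRank P.cl (δ '' A) (A ∪ B ∪ δ '' B) ≤ clRank P.cl A B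

/-- The `δ`-closure operator: `a ∈ cl^δ(B)` iff `rk(J^∞(a) | J^∞(B))` is finite. -/
noncomputable def clDelta {X : Type*} (P : Pregeometry X) (δ : X → X) : Set X → Set X :=
  fun B => {a | clRank P.cl (Jinf δ {a}) (Jinf δ B) < Cardinal.aleph0}


/-! If `δⁿ a ∈ cl(Jⁿ⁻¹(a) ∪ J^∞(B))`, the quasi-endomorphism inequality for singletons shows that
`δ` maps this closure into itself, so all of `J^∞(a)` lies in the closure of `n` points over
`J^∞(B)` and Steinitz exchange bounds its rank by `n`. Otherwise every `δᵐ a` lies outside the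
closure of its predecessors together with `J^∞(B)`, so each `Jᵐ(a)` is independent over `J^∞(B)`
with `m + 1` elements, which rules out (1) and (2). -/

open Set Cardinal

section

variable {X : Type*}

section Rank

variable {cl : Set X → Set X}

theorem clRank_le {A B : Set X} {c : Cardinal}
    (h : ∀ S ⊆ A, clIndep cl B S → #S ≤ c) : clRank cl A B ≤ c :=
  ciSup_le' fun S => h S.1 S.2.1 S.2.2

theorem le_clRank {A B S : Set X} (hSA : S ⊆ A) (hS : clIndep cl B S) : #S ≤ clRank cl A B :=
  le_ciSup (f := fun S : {S : Set X // S ⊆ A ∧ clIndep cl B S} => #S.1)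
    ⟨#X, by rintro c ⟨S, rfl⟩; exact mk_set_le _⟩ ⟨S, hSA, hS⟩

theorem clIndep.diff_singleton {C S : Set X} {s : X} (hS : clIndep cl C S) (hs : s ∈ S) :
    clIndep cl (C ∪ {s}) (S \ {s}) := by
  rintro u ⟨huS, hus⟩
  have hus : u ≠ s := hus
  have : C ∪ {s} ∪ ((S \ {s}) \ {u}) = C ∪ (S \ {u}) := by
    ext x
    simp only [mem_union, mem_sdiff, mem_singleton_iff]
    grind
  rw [this]
  exact hS u huS

end Rank

namespace Pregeometry

variable (P : Pregeometry X)

theorem cl_subset_cl_of_subset_cl {A B : Set X} (h : A ⊆ P.cl B) : P.cl A ⊆ P.cl B :=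
  (P.mono _ _ h).trans (P.cl_cl B).le

theorem clIndep_eq_empty_of_subset_cl {C S : Set X} (hS : clIndep P.cl C S)
    (h : S ⊆ P.cl C) : S = ∅ :=
  eq_empty_of_forall_notMem fun s hs => hS s hs (P.mono _ _ subset_union_left (h hs))

theorem clIndep_insert {C S : Set X} {x : X} (hS : clIndep P.cl C S)
    (hx : x ∉ P.cl (C ∪ S)) : clIndep P.cl C (insert x S) := by
  rintro u (rfl | huS) hu
  · refine hx (P.mono _ _ (union_subset_union_right _ ?_) hu)
    rintro y ⟨hy | hy, hyu⟩
    · exact absurd hy hyu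
    · exact hy
  · have hux : u ≠ x := by
      rintro rfl
      exact hx (P.subset_cl _ (Or.inr huS))
    have hu' : u ∈ P.cl ((C ∪ (S \ {u})) ∪ {x}) := by
      convert hu using 2
      ext y
      simp only [mem_union, mem_sdiff, mem_singleton_iff, mem_insert_iff]
      grind
    refine hx (P.mono _ _ ?_ (P.exchange u x _ hu' (hS u huS)))
    rintro y ((hy | ⟨hy, -⟩) | rfl)
    · exact Or.inl hy
    · exact Or.inr hy
    · exact Or.inr huS

theorem clIndep_mk_le_card_of_subset_cl [DecidableEq X] (T : Finset X) :
    ∀ {C S : Set X}, clIndep P.cl C S → S ⊆ P.cl (↑T ∪ C) → #S ≤ T.card := by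
  induction T using Finset.induction_on with
  | empty =>
    intro C S hS hST
    rw [P.clIndep_eq_empty_of_subset_cl hS (by simpa using hST)]
    simp
  | insert t T htT ih =>
    intro C S hS hST
    by_cases hT : S ⊆ P.cl (↑T ∪ C)
    · exact (ih hS hT).trans (Nat.cast_le.2 (Finset.card_le_card (Finset.subset_insert t T)))
    obtain ⟨s, hs, hsT⟩ := not_subset.1 hT
    have hts : t ∈ P.cl ((↑T ∪ C) ∪ {s}) := by
      refine P.exchange s t _ ?_ hsT
      simpa [union_singleton, insert_union] using hST hs
    have hST' : S \ {s} ⊆ P.cl (↑T ∪ (C ∪ {s})) := by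
      refine sdiff_subset.trans (hST.trans (P.cl_subset_cl_of_subset_cl ?_))
      rw [Finset.coe_insert]
      rintro y ((rfl | hy) | hy)
      · exact P.mono _ _ (by grind) hts
      · exact P.subset_cl _ (Or.inl hy)
      · exact P.subset_cl _ (Or.inr (Or.inl hy))
    calc #S = #↥(S \ {s}) + 1 := by
          rw [← mk_insert (fun h => h.2 rfl), insert_sdiff_singleton, insert_eq_of_mem hs]
      _ ≤ T.card + 1 := by gcongr; exact ih (hS.diff_singleton hs) hST'
      _ = (insert t T).card := by rw [Finset.card_insert_of_notMem htT]; push_cast; rfl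

theorem clRank_le_card_of_subset_cl [DecidableEq X] {A C : Set X} {T : Finset X}
    (h : A ⊆ P.cl (↑T ∪ C)) : clRank P.cl A C ≤ T.card :=
  clRank_le fun _ hSA hS => P.clIndep_mk_le_card_of_subset_cl T hS (hSA.trans h)

theorem clRank_eq_zero_iff {A B : Set X} : clRank P.cl A B = 0 ↔ A ⊆ P.cl B := by
  refine ⟨fun h x hxA => by_contra fun hx => ?_, fun h => ?_⟩
  · have hI : clIndep P.cl B {x} := by
      rintro _ rfl
      simpa using hx
    have := le_clRank (singleton_subset_iff.2 hxA) hI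
    simp [h] at this
  · refine nonpos_iff_eq_zero.1 (clRank_le fun S hSA hS => ?_)
    rw [P.clIndep_eq_empty_of_subset_cl hS (hSA.trans h)]
    simp

end Pregeometry

section QuasiEndo

variable {P : Pregeometry X} {δ : X → X}

theorem IsQuasiEndo.map_mem_cl (hδ : IsQuasiEndo P δ) {E : Set X} {x : X} (hx : x ∈ P.cl E) :
    δ x ∈ P.cl (E ∪ δ '' E) := by
  have h0 : clRank P.cl {δ x} ({x} ∪ E ∪ δ '' E) = 0 := by
    have := hδ {x} E
    rwa [image_singleton, (P.clRank_eq_zero_iff).2 (singleton_subset_iff.2 hx),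
      nonpos_iff_eq_zero] at this
  have hsub : {x} ∪ E ∪ δ '' E ⊆ P.cl (E ∪ δ '' E) :=
    union_subset (union_subset (singleton_subset_iff.2 (P.mono _ _ subset_union_left hx))
      (subset_union_left.trans (P.subset_cl _))) (subset_union_right.trans (P.subset_cl _))
  exact P.cl_subset_cl_of_subset_cl hsub ((P.clRank_eq_zero_iff).1 h0 rfl)

theorem IsQuasiEndo.mapsTo_cl (hδ : IsQuasiEndo P δ) {E : Set X} (h : δ '' E ⊆ P.cl E) :
    MapsTo δ (P.cl E) (P.cl E) := fun _ hx =>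
  P.cl_subset_cl_of_subset_cl (union_subset (P.subset_cl E) h) (hδ.map_mem_cl hx)

end QuasiEndo

section Jets

variable (δ : X → X)

theorem Jinf_singleton (a : X) : Jinf δ {a} = range fun i => δ^[i] a := by
  simp [Jinf]

theorem Jlt_singleton [DecidableEq X] (a : X) (n : ℕ) :
    Jlt δ {a} n = ↑((Finset.range n).image fun i => δ^[i] a) := by
  ext
  simp [Jlt]

theorem Jlt_add_one_singleton (a : X) (n : ℕ) :
    Jlt δ {a} (n + 1) = insert (δ^[n] a) (Jlt δ {a} n) := by
  classical
  rw [Jlt_singleton, Jlt_singleton, Finset.range_add_one, Finset.image_insert, Finset.coe_insert]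

theorem Jlt_add_one_subset_Jle (A : Set X) (n : ℕ) : Jlt δ A (n + 1) ⊆ Jle δ A n :=
  iUnion₂_mono fun _ _ => image_mono fun _ => Nat.lt_succ_iff.1

theorem Jlt_subset_Jinf (A : Set X) (n : ℕ) : Jlt δ A n ⊆ Jinf δ A :=
  iUnion₂_mono fun _ _ => image_subset_range _ _

theorem Jle_subset_Jinf (A : Set X) (n : ℕ) : Jle δ A n ⊆ Jinf δ A :=
  iUnion₂_mono fun _ _ => image_subset_range _ _

theorem mapsTo_Jinf (B : Set X) : MapsTo δ (Jinf δ B) (Jinf δ B) := by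
  simp only [MapsTo, Jinf, mem_iUnion, mem_range]
  rintro _ ⟨b, hb, i, rfl⟩
  exact ⟨b, hb, i + 1, Function.iterate_succ_apply' δ i b⟩

end Jets

variable {P : Pregeometry X} {δ : X → X} {a : X} {C : Set X}

theorem IsQuasiEndo.Jinf_subset_cl (hδ : IsQuasiEndo P δ) (hC : MapsTo δ C C) {n : ℕ}
    (h : δ^[n] a ∈ P.cl (Jlt δ {a} n ∪ C)) : Jinf δ {a} ⊆ P.cl (Jlt δ {a} n ∪ C) := by
  classical
  have hle : ∀ i ≤ n, δ^[i] a ∈ P.cl (Jlt δ {a} n ∪ C) := by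
    intro i hi
    rcases hi.lt_or_eq with hi | rfl
    · exact P.subset_cl _ (Or.inl (by simp only [Jlt_singleton]; simpa using ⟨i, hi, rfl⟩))
    · exact h
  have hK : MapsTo δ (P.cl (Jlt δ {a} n ∪ C)) (P.cl (Jlt δ {a} n ∪ C)) := by
    refine hδ.mapsTo_cl ?_
    rintro _ ⟨y, hy | hy, rfl⟩
    · obtain ⟨i, hi, rfl⟩ : ∃ i < n, δ^[i] a = y := by simpa [Jlt_singleton] using hy
      rw [← Function.iterate_succ_apply' δ i a]
      exact hle (i + 1) hi
    · exact P.subset_cl _ (Or.inr (hC hy))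
  rw [Jinf_singleton]
  rintro _ ⟨m, rfl⟩
  rcases le_total m n with hm | hm
  · exact hle m hm
  · obtain ⟨k, rfl⟩ := exists_add_of_le hm
    change δ^[n + k] a ∈ _
    rw [add_comm, Function.iterate_add_apply]
    exact hK.iterate k (hle n le_rfl)

theorem clRank_le_of_subset_cl_Jlt {A : Set X} {n : ℕ} (h : A ⊆ P.cl (Jlt δ {a} n ∪ C)) :
    clRank P.cl A C ≤ n := by
  classical
  rw [Jlt_singleton] at h
  exact (P.clRank_le_card_of_subset_cl h).trans
    (Nat.cast_le.2 (Finset.card_image_le.trans_eq (Finset.card_range n)))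

theorem clIndep_Jlt_of_forall_iterate_notMem_cl
    (h : ∀ m, δ^[m] a ∉ P.cl (Jlt δ {a} m ∪ C)) (m : ℕ) :
    clIndep P.cl C (Jlt δ {a} m) ∧ #(Jlt δ {a} m) = m := by
  induction m with
  | zero => simp [Jlt, clIndep]
  | succ m ih =>
    have hm : δ^[m] a ∉ P.cl (C ∪ Jlt δ {a} m) := union_comm C _ ▸ h m
    rw [Jlt_add_one_singleton, mk_insert fun hmem => hm (P.subset_cl _ (Or.inr hmem)), ih.2]
    exact ⟨P.clIndep_insert ih.1 hm, by push_cast; rfl⟩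

theorem natCast_le_clRank_of_forall_iterate_notMem_cl
    (h : ∀ m, δ^[m] a ∉ P.cl (Jlt δ {a} m ∪ C)) {A : Set X} {m : ℕ} (hA : Jlt δ {a} m ⊆ A) :
    (m : Cardinal) ≤ clRank P.cl A C := by
  obtain ⟨hI, hcard⟩ := clIndep_Jlt_of_forall_iterate_notMem_cl h m
  exact hcard ▸ le_clRank hA hI

end

/-- For a quasi-endomorphism `δ` of a finitary matroid, the following are equivalent:
(1) `rk(J^∞(a) | J^∞(B))` is finite;
(2) there is `n` with `rk(Jⁿ(a) | J^∞(B)) ≤ n`;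
(3) there is `n` with `δⁿ a ∈ cl(J^{n-1}(a) ∪ J^∞(B))`. -/
theorem clDelta_mem_tfae {X : Type*} (P : Pregeometry X) (δ : X → X)
    (hδ : IsQuasiEndo P δ) (a : X) (B : Set X) :
    (clRank P.cl (Jinf δ {a}) (Jinf δ B) < Cardinal.aleph0
      ↔ ∃ n : ℕ, clRank P.cl (Jle δ {a} n) (Jinf δ B) ≤ (n : Cardinal)) ∧
    ((∃ n : ℕ, clRank P.cl (Jle δ {a} n) (Jinf δ B) ≤ (n : Cardinal))
      ↔ ∃ n : ℕ, δ^[n] a ∈ P.cl (Jlt δ {a} n ∪ Jinf δ B)) := by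
  have h31 : ∀ n, δ^[n] a ∈ P.cl (Jlt δ {a} n ∪ Jinf δ B) →
      clRank P.cl (Jinf δ {a}) (Jinf δ B) ≤ n :=
    fun _ h => clRank_le_of_subset_cl_Jlt (hδ.Jinf_subset_cl (mapsTo_Jinf δ B) h)
  have h32 : ∀ n, δ^[n] a ∈ P.cl (Jlt δ {a} n ∪ Jinf δ B) →
      clRank P.cl (Jle δ {a} n) (Jinf δ B) ≤ n := fun n h =>
    clRank_le_of_subset_cl_Jlt ((Jle_subset_Jinf δ _ n).trans
      (hδ.Jinf_subset_cl (mapsTo_Jinf δ B) h))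
  have h13 : clRank P.cl (Jinf δ {a}) (Jinf δ B) < aleph0 →
      ∃ n, δ^[n] a ∈ P.cl (Jlt δ {a} n ∪ Jinf δ B) := by
    intro h1
    by_contra! h
    exact h1.not_ge (aleph0_le.2 fun m =>
      natCast_le_clRank_of_forall_iterate_notMem_cl h (Jlt_subset_Jinf δ _ m))
  have h23 : (∃ n : ℕ, clRank P.cl (Jle δ {a} n) (Jinf δ B) ≤ n) →
      ∃ n, δ^[n] a ∈ P.cl (Jlt δ {a} n ∪ Jinf δ B) := by
    rintro ⟨n, hn⟩
    by_contra! h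
    have := (natCast_le_clRank_of_forall_iterate_notMem_cl h
      (Jlt_add_one_subset_Jle δ _ n)).trans hn
    norm_cast at this
    omega
  refine ⟨⟨fun h1 => ?_, fun h2 => ?_⟩, h23, fun ⟨n, h⟩ => ⟨n, h32 n h⟩⟩
  · obtain ⟨n, h⟩ := h13 h1
    exact ⟨n, h32 n h⟩
  · obtain ⟨n, h⟩ := h23 h2
    exact (h31 n h).trans_lt natCast_lt_aleph0
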